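/- For every c > 0: sup_{x ≥ c} | (ln G_ε)'(x) − 1/x | → 0 and sup_{x ≥ c} | (ln G_ε)''(x) + 1/x² | → 0 as ε → 0+; that is, on the half-line [c, ∞) the first derivative of x ↦ ln(G_ε(x)) converges uniformly to 1/x and its second derivative converges uniformly to −1/x² as ε → 0+. -/

import Mathlib

noncomputable def Geps (ε x : ℝ) : ℝ := ε * Real.log (1 + Real.exp (x / ε))

noncomputable def logGepsDeriv (ε x : ℝ) : ℝ :=
  Real.exp (x / ε) / (ε * (1 + Real.exp (x / ε)) * Real.log (1 + Real.exp (x / ε)))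

noncomputable def logGepsDeriv2 (ε x : ℝ) : ℝ :=
  (1 / ε ^ 2) * (Real.exp (x / ε) / (1 + Real.exp (x / ε)) ^ 2) *
    (1 / Real.log (1 + Real.exp (x / ε))) *
    (1 - Real.exp (x / ε) / Real.log (1 + Real.exp (x / ε)))

/-! With `t = x / ε`, the two derivatives are rescalings of those at `ε = 1`:
`(ln G_ε)'(x) = φ(t) / ε` and `(ln G_ε)''(x) = ψ(t) / ε²`, where `φ = (ln G_1)'` and
`ψ = (ln G_1)''`. Since `ln(1 + eᵗ) = t + o(1)` as `t → ∞`, we get `t φ(t) → 1` and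
`t² ψ(t) → -1`. On `[c, ∞)` we have `t ≥ c / ε → ∞` uniformly in `x`, and the error
`(1/xᵏ) |tᵏ F(t) - a|` is at most `c⁻ᵏ |tᵏ F(t) - a|`, which gives uniform convergence. -/

open Real Filter Topology Set

theorem log_one_add_exp_sub_self (t : ℝ) : log (1 + exp t) - t = log (1 + exp (-t)) := by
  rw [sub_eq_iff_eq_add, ← log_exp t, ← log_mul (by positivity) (by positivity), log_exp,
    add_mul, one_mul, ← exp_add, neg_add_cancel, exp_zero, add_comm]

theorem log_one_add_exp_pos (t : ℝ) : 0 < log (1 + exp t) :=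
  log_pos (lt_add_of_pos_right 1 (exp_pos t))

theorem exp_div_one_add_exp (t : ℝ) : exp t / (1 + exp t) = sigmoid t := by
  rw [sigmoid_def, exp_neg]
  field_simp
  ring

theorem tendsto_one_add_exp_atTop : Tendsto (fun t => 1 + exp t) atTop atTop :=
  tendsto_atTop_add_const_left _ 1 tendsto_exp_atTop

theorem tendsto_log_one_add_exp_sub_self_atTop :
    Tendsto (fun t => log (1 + exp t) - t) atTop (𝓝 0) := by
  simpa [log_one_add_exp_sub_self] using
    (tendsto_exp_neg_atTop_nhds_zero.const_add 1).log (by norm_num)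

theorem tendsto_div_log_one_add_exp_atTop :
    Tendsto (fun t => t / log (1 + exp t)) atTop (𝓝 1) := by
  have h := (tendsto_log_one_add_exp_sub_self_atTop.div_atTop
    (tendsto_log_atTop.comp tendsto_one_add_exp_atTop)).const_sub 1
  rw [sub_zero] at h
  refine h.congr fun t => ?_
  have := (log_one_add_exp_pos t).ne'
  simp only [Function.comp_apply]
  field_simp
  ring

theorem tendsto_log_one_add_exp_div_one_add_exp_atTop :
    Tendsto (fun t => log (1 + exp t) / (1 + exp t)) atTop (𝓝 0) := by
  have := (tendsto_pow_log_div_mul_add_atTop 1 0 1 one_ne_zero).comp tendsto_one_add_exp_atTop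
  simpa [Function.comp_def] using this

theorem logGepsDeriv_eq_div (ε x : ℝ) : logGepsDeriv ε x = logGepsDeriv 1 (x / ε) / ε := by
  simp only [logGepsDeriv, div_one, one_mul]
  rw [div_div]
  congr 1
  ring

theorem logGepsDeriv2_eq_div (ε x : ℝ) :
    logGepsDeriv2 ε x = logGepsDeriv2 1 (x / ε) / ε ^ 2 := by
  simp only [logGepsDeriv2, div_one, one_pow]
  ring

theorem tendsto_mul_logGepsDeriv_one_atTop :
    Tendsto (fun t => t * logGepsDeriv 1 t) atTop (𝓝 1) := by
  have h := tendsto_sigmoid_atTop.mul tendsto_div_log_one_add_exp_atTop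
  rw [mul_one] at h
  refine h.congr fun t => ?_
  have := (log_one_add_exp_pos t).ne'
  simp only [logGepsDeriv, div_one, one_mul, ← exp_div_one_add_exp]
  field_simp

theorem tendsto_sq_mul_logGepsDeriv2_one_atTop :
    Tendsto (fun t => t ^ 2 * logGepsDeriv2 1 t) atTop (𝓝 (-1)) := by
  have h := (tendsto_sigmoid_atTop.mul (tendsto_div_log_one_add_exp_atTop.pow 2)).mul
    (tendsto_log_one_add_exp_div_one_add_exp_atTop.sub tendsto_sigmoid_atTop)
  norm_num at h
  refine h.congr fun t => ?_
  have := (log_one_add_exp_pos t).ne'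
  simp only [logGepsDeriv2, div_one, one_pow, ← exp_div_one_add_exp]
  field_simp

theorem tendstoUniformlyOn_Ici_div_pow_comp_div {F : ℝ → ℝ} {a : ℝ} {k : ℕ}
    (hF : Tendsto (fun t => t ^ k * F t) atTop (𝓝 a)) {c : ℝ} (hc : 0 < c) :
    TendstoUniformlyOn (fun ε x => F (x / ε) / ε ^ k) (fun x => a / x ^ k) (𝓝[>] 0) (Ici c) := by
  rw [Metric.tendstoUniformlyOn_iff]
  intro δ hδ
  obtain ⟨T, hT⟩ := eventually_atTop.1 <|
    hF.eventually (Metric.ball_mem_nhds a (mul_pos hδ (pow_pos hc k)))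
  have hc_div : Tendsto (fun ε => c / ε) (𝓝[>] 0) atTop :=
    (tendsto_inv_nhdsGT_zero.const_mul_atTop hc).congr fun ε => (div_eq_mul_inv c ε).symm
  filter_upwards [hc_div.eventually_ge_atTop T, self_mem_nhdsWithin]
    with ε hTε (hε : 0 < ε) x (hx : c ≤ x)
  have hx0 : 0 < x := hc.trans_le hx
  have hclose := hT (x / ε) (hTε.trans (by gcongr))
  have hscale : F (x / ε) / ε ^ k = (x / ε) ^ k * F (x / ε) / x ^ k := by
    rw [div_pow]
    field_simp
  calc dist (a / x ^ k) (F (x / ε) / ε ^ k) = dist ((x / ε) ^ k * F (x / ε)) a / x ^ k := by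
        rw [hscale, dist_comm, Real.dist_eq, Real.dist_eq, ← sub_div, abs_div,
          abs_of_pos (pow_pos hx0 k)]
    _ ≤ dist ((x / ε) ^ k * F (x / ε)) a / c ^ k := by gcongr
    _ < δ := (div_lt_iff₀ (pow_pos hc k)).2 hclose

/-- For every `c > 0`, on the half-line `[c, ∞)` the first derivative
of `x ↦ ln(G_ε(x))` converges uniformly to `1/x`, and its second derivative converges
uniformly to `−1/x²`, as `ε → 0⁺`. -/
theorem log_geps_derivs_uniform_convergence_on_Ici (c : ℝ) (hc : 0 < c) :
    TendstoUniformlyOn (fun ε : ℝ => fun x : ℝ => logGepsDeriv ε x)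
        (fun x : ℝ => 1 / x) (nhdsWithin 0 (Set.Ioi 0)) (Set.Ici c) ∧
      TendstoUniformlyOn (fun ε : ℝ => fun x : ℝ => logGepsDeriv2 ε x)
        (fun x : ℝ => -(1 / x ^ 2)) (nhdsWithin 0 (Set.Ioi 0)) (Set.Ici c) := by
  have hDeriv := tendstoUniformlyOn_Ici_div_pow_comp_div (k := 1)
    (by simpa only [pow_one] using tendsto_mul_logGepsDeriv_one_atTop) hc
  have hDeriv2 := tendstoUniformlyOn_Ici_div_pow_comp_div tendsto_sq_mul_logGepsDeriv2_one_atTop hc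
  simp only [pow_one, ← logGepsDeriv_eq_div] at hDeriv
  simp only [neg_div, ← logGepsDeriv2_eq_div] at hDeriv2
  exact ⟨hDeriv, hDeriv2⟩
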